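/- arXiv:1107.1646 — 6 statements merged into one kernel-verified Lean document; each statement's English description precedes it below -/
import Mathlib

section
/- Let p and q be positive integers with p odd and p ≥ 4q + 1. Then (X + 1)² divides Φ_{p,q} in the polynomial ring ℤ[X]. -/
open Polynomial

/-- The polynomial `Φ_{p,q} = X^{2p} - X^{p+4q} + X^{p+2q} + 2X^p + X^{p-2q} - X^{p-4q} + 1`. -/
noncomputable def Phi (p q : ℕ) : Polynomial ℤ :=
  X ^ (2 * p) - X ^ (p + 4 * q) + X ^ (p + 2 * q) + 2 * X ^ p
    + X ^ (p - 2 * q) - X ^ (p - 4 * q) + 1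

/-- For positive integers `p, q` with `p` odd and `p ≥ 4q + 1`,
`(X + 1)²` divides `Φ_{p,q}` in `ℤ[X]`. -/
theorem Phi_div_by_X_add_one_sq
    (p q : ℕ) (hq : 0 < q) (hodd : Odd p) (hp : 4 * q + 1 ≤ p) :
    (X + 1) ^ 2 ∣ Phi p q := by
  have hX : (X + 1 : ℤ[X]) = X - C (-1) := by simp
  have h1 : (X + 1 : ℤ[X]) ∣ X ^ p + 1 := by
    rw [hX, dvd_iff_isRoot]
    simp [IsRoot, hodd.neg_one_pow]
  have h2 : (X + 1 : ℤ[X]) ∣ X ^ (2 * q) - 1 := by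
    rw [hX, dvd_iff_isRoot]
    simp [IsRoot, pow_mul]
  have key : Phi p q = (X ^ p + 1) ^ 2
      - X ^ (p - 4 * q) * ((X ^ (2 * q) - 1) ^ 2 * (X ^ (4 * q) + X ^ (2 * q) + 1)) := by
    obtain ⟨k, hk⟩ : ∃ k, p = k + 4 * q := ⟨p - 4 * q, by omega⟩
    subst hk
    unfold Phi
    rw [show k + 4 * q - 2 * q = k + 2 * q by omega, show k + 4 * q - 4 * q = k by omega]
    ring
  rw [key]
  exact dvd_sub (pow_dvd_pow_of_dvd h1 2)
    (Dvd.dvd.mul_left (Dvd.dvd.mul_right (pow_dvd_pow_of_dvd h2 2) _) _)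
end

section
/- Let p and q be positive integers with 4 ∣ p, q odd and p ≥ 4q + 1. Then (X² + 1)² divides Φ_{p,q} in the polynomial ring ℤ[X]. -/
open Polynomial

/-- For positive integers `p, q` with `4 ∣ p`, `q` odd and `p ≥ 4q + 1`,
`(X² + 1)²` divides `Φ_{p,q}` in `ℤ[X]`. -/
theorem Phi_div_by_X_sq_add_one_sq
    (p q : ℕ) (hp4 : 4 ∣ p) (hqodd : Odd q) (hp : 4 * q + 1 ≤ p) :
    (X ^ 2 + 1) ^ 2 ∣ Phi p q := by
  obtain ⟨r, hr⟩ : ∃ r, p = r + 4 * q := ⟨p - 4 * q, by omega⟩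
  subst hr
  obtain ⟨b, hb⟩ : ∃ b, r = 4 * b := by
    rcases hp4 with ⟨c, hc⟩; exact ⟨c - q, by omega⟩
  have key : Phi (r + 4 * q) q
      = (X ^ (r + 8 * q) - 1) * (X ^ r - 1)
        + X ^ (r + 2 * q) * (X ^ (2 * q) + 1) ^ 2 := by
    unfold Phi
    have h1 : r + 4 * q - 2 * q = r + 2 * q := by omega
    have h2 : r + 4 * q - 4 * q = r := by omega
    have h3 : 2 * (r + 4 * q) = (r + 8 * q) + r := by omega
    have h4 : r + 4 * q + 4 * q = r + 8 * q := by omega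
    rw [h1, h2, h3, h4]
    ring
  rw [key]
  have hX4 : (X ^ 2 + 1 : Polynomial ℤ) ∣ X ^ 4 - 1 := ⟨X ^ 2 - 1, by ring⟩
  have hA : (X ^ 2 + 1 : Polynomial ℤ) ∣ X ^ (r + 8 * q) - 1 := by
    refine hX4.trans ?_
    have h : r + 8 * q = 4 * (b + 2 * q) := by omega
    rw [h, pow_mul]
    simpa using sub_dvd_pow_sub_pow (X ^ 4 : Polynomial ℤ) 1 (b + 2 * q)
  have hB : (X ^ 2 + 1 : Polynomial ℤ) ∣ X ^ r - 1 := by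
    refine hX4.trans ?_
    rw [hb, pow_mul]
    simpa using sub_dvd_pow_sub_pow (X ^ 4 : Polynomial ℤ) 1 b
  have hC : (X ^ 2 + 1 : Polynomial ℤ) ∣ X ^ (2 * q) + 1 := by
    have := Odd.add_dvd_pow_add_pow (X ^ 2 : Polynomial ℤ) 1 hqodd
    simpa [← pow_mul, mul_comm] using this
  refine dvd_add ?_ (Dvd.dvd.mul_left (pow_dvd_pow_of_dvd hC 2) _)
  rw [sq]
  exact mul_dvd_mul hA hB
end

section
/- Let ℓ be an odd prime and let p, q be positive integers with ℓ ∣ p and p ≥ 4q + 1. In the polynomial ring (ℤ/ℓℤ)[X], the formal derivative of the reduction of Φ_{p,q} modulo ℓ equals 2q·X^{p−4q−1}·(X^{4q} − 1)·(−2X^{4q} + X^{2q} − 2). -/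
open Polynomial

namespace Polynomial

variable {R : Type*} [CommRing R] {p : ℕ}

theorem derivative_X_pow_of_natCast_eq_zero (hp : (p : R) = 0) :
    derivative (X ^ p : R[X]) = 0 := by
  rw [derivative_X_pow, hp, C_0, zero_mul]

theorem derivative_X_pow_add_of_natCast_eq_zero (hp : (p : R) = 0) (k : ℕ) :
    derivative (X ^ (p + k) : R[X]) = C (k : R) * X ^ (p + k - 1) := by
  rw [derivative_X_pow, Nat.cast_add, hp, zero_add]

theorem derivative_X_pow_sub_of_natCast_eq_zero (hp : (p : R) = 0) {k : ℕ} (hk : k ≤ p) :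
    derivative (X ^ (p - k) : R[X]) = -C (k : R) * X ^ (p - k - 1) := by
  rw [derivative_X_pow, Nat.cast_sub hk, hp, zero_sub, C_neg]

end Polynomial

section

variable {R : Type*} [CommRing R]

theorem map_Phi (f : ℤ →+* R) (p q : ℕ) :
    (Phi p q).map f = X ^ (2 * p) - X ^ (p + 4 * q) + X ^ (p + 2 * q) + 2 * X ^ p
      + X ^ (p - 2 * q) - X ^ (p - 4 * q) + 1 := by
  simp [Phi]

theorem derivative_map_Phi (f : ℤ →+* R) {p q : ℕ} (hp : (p : R) = 0) (hpq : 4 * q < p) :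
    derivative ((Phi p q).map f) = C ((2 * q : ℕ) : R) * X ^ (p - 4 * q - 1) *
      (X ^ (4 * q) - 1) * (-2 * X ^ (4 * q) + X ^ (2 * q) - 2) := by
  have h2p : ((2 * p : ℕ) : R) = 0 := by rw [Nat.cast_mul, hp, mul_zero]
  simp only [map_Phi, derivative_add, derivative_sub, derivative_one, derivative_mul,
    derivative_ofNat, zero_mul, mul_zero, add_zero,
    derivative_X_pow_of_natCast_eq_zero hp, derivative_X_pow_of_natCast_eq_zero h2p,
    derivative_X_pow_add_of_natCast_eq_zero hp,
    derivative_X_pow_sub_of_natCast_eq_zero hp (show 2 * q ≤ p by omega),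
    derivative_X_pow_sub_of_natCast_eq_zero hp hpq.le]
  -- Truncated subtraction blocks `ring`: rewrite each exponent as `(p - 4q - 1) + _`.
  have h8 : p + 4 * q - 1 = p - 4 * q - 1 + 8 * q := by omega
  have h6 : p + 2 * q - 1 = p - 4 * q - 1 + 6 * q := by omega
  have h2 : p - 2 * q - 1 = p - 4 * q - 1 + 2 * q := by omega
  rw [h8, h6, h2]
  simp only [Nat.cast_mul, Nat.cast_ofNat, map_mul, map_natCast, map_ofNat]
  ring

end

theorem derivative_Phi_mod_ell_general
    (ℓ : ℕ)
    (p q : ℕ) (hdvd : ℓ ∣ p) (hp : 4 * q + 1 ≤ p) :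
    Polynomial.derivative ((Phi p q).map (Int.castRingHom (ZMod ℓ))) =
      Polynomial.C ((2 * q : ℕ) : ZMod ℓ) * X ^ (p - 4 * q - 1) *
        (X ^ (4 * q) - 1) * (-2 * X ^ (4 * q) + X ^ (2 * q) - 2) :=
  derivative_map_Phi _ ((ZMod.natCast_eq_zero_iff p ℓ).2 hdvd) hp

/-- Let `ℓ` be an odd prime and `p, q` positive integers with `ℓ ∣ p` and
`p ≥ 4q + 1`. In `(ℤ/ℓℤ)[X]`, the formal derivative of the reduction of `Φ_{p,q}` mod `ℓ`
equals `2q · X^{p-4q-1} · (X^{4q} - 1) · (-2X^{4q} + X^{2q} - 2)`. -/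
theorem derivative_Phi_mod_ell
    (ℓ : ℕ) (hℓ : ℓ.Prime) (hℓodd : Odd ℓ)
    (p q : ℕ) (hq : 0 < q) (hdvd : ℓ ∣ p) (hp : 4 * q + 1 ≤ p) :
    Polynomial.derivative ((Phi p q).map (Int.castRingHom (ZMod ℓ))) =
      Polynomial.C ((2 * q : ℕ) : ZMod ℓ) * X ^ (p - 4 * q - 1) *
        (X ^ (4 * q) - 1) * (-2 * X ^ (4 * q) + X ^ (2 * q) - 2) :=
  derivative_Phi_mod_ell_general ℓ p q hdvd hp
end

section
/- Let ℓ be an odd prime, let p and q be coprime positive integers with ℓ ∣ p and p ≥ 4q + 1, and let K be a field of characteristic ℓ. If α ∈ K is nonzero and the image in K[X] of the formal derivative of Φ_{p,q} vanishes at α, then either α^{4q} = 1 or 2α^{4q} − α^{2q} + 2 = 0 (equivalently, α^{2q} + α^{−2q} = 1/2). -/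
/-! Modulo `p`, only the exponent shifts `±2q, ±4q` survive as coefficients of `Φ_{p,q}'`, and
they combine to `-2q X^{p-4q-1} (X^{4q} - 1)(2X^{4q} - X^{2q} + 2)`. In characteristic `ℓ ∣ p` this is
the whole derivative, and `2q` is a unit there because `ℓ` is odd and, being a divisor of `p`,
prime to `q`. -/

open Polynomial

theorem natCast_dvd_derivative_Phi_add {p q : ℕ} (h : 4 * q + 1 ≤ p) :
    (p : ℤ[X]) ∣ derivative (Phi p q) +
      (2 * q : ℤ[X]) * X ^ (p - (4 * q + 1)) * (X ^ (4 * q) - 1) * (2 * X ^ (4 * q) - X ^ (2 * q) + 2) := by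
  obtain ⟨m, rfl⟩ : ∃ m, p = m + (4 * q + 1) := ⟨p - (4 * q + 1), by omega⟩
  refine ⟨2 * X ^ (2 * m + 8 * q + 1) - X ^ (m + 8 * q) + X ^ (m + 6 * q) + 2 * X ^ (m + 4 * q)
    + X ^ (m + 2 * q) - X ^ m, ?_⟩
  rw [Phi, show 2 * (m + (4 * q + 1)) = (2 * m + 8 * q + 1) + 1 by ring,
    show m + (4 * q + 1) + 4 * q = (m + 8 * q) + 1 by ring,
    show m + (4 * q + 1) + 2 * q = (m + 6 * q) + 1 by ring,
    show m + (4 * q + 1) - 2 * q = (m + 2 * q) + 1 by omega,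
    show m + (4 * q + 1) - 4 * q = m + 1 by omega, Nat.add_sub_cancel,
    show m + (4 * q + 1) = (m + 4 * q) + 1 by ring]
  simp only [derivative_sub, derivative_mul, derivative_X_pow_succ, derivative_one,
    derivative_ofNat, zero_mul, zero_add, add_zero, map_add, map_natCast, map_one]
  push_cast
  ring

theorem aeval_derivative_Phi_of_natCast_eq_zero {R : Type*} [CommRing R] {p q : ℕ}
    (h : 4 * q + 1 ≤ p) (hp : (p : R) = 0) (α : R) :
    aeval α (derivative (Phi p q)) =
      -(2 * q * α ^ (p - (4 * q + 1)) * (α ^ (4 * q) - 1) * (2 * α ^ (4 * q) - α ^ (2 * q) + 2)) := by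
  obtain ⟨A, hA⟩ := natCast_dvd_derivative_Phi_add h
  have := congrArg (aeval α) hA
  simp only [map_add, map_mul, map_sub, map_pow, map_natCast, map_ofNat, map_one, aeval_X, hp,
    zero_mul] at this
  linear_combination this

theorem roots_of_derivative_Phi_char_ell_general
    (ℓ : ℕ) (hℓ : ℓ.Prime) (hℓodd : Odd ℓ)
    (p q : ℕ) (hco : Nat.Coprime p q)
    (hdvd : ℓ ∣ p) (hge : 4 * q + 1 ≤ p)
    (K : Type*) [Field K] [CharP K ℓ]
    (α : K) (hα : α ≠ 0)
    (hroot : Polynomial.aeval α (Polynomial.derivative (Phi p q)) = 0) :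
    α ^ (4 * q) = 1 ∨ 2 * α ^ (4 * q) - α ^ (2 * q) + 2 = 0 := by
  have hℓq : ¬ ℓ ∣ q := fun h => hℓ.one_lt.ne' (Nat.eq_one_of_dvd_coprimes hco hdvd h)
  have hℓ2 : ¬ ℓ ∣ 2 := fun h => by
    rw [(Nat.prime_dvd_prime_iff_eq hℓ Nat.prime_two).1 h] at hℓodd
    exact Nat.not_odd_iff_even.2 even_two hℓodd
  have h2q : (2 * q : K) ≠ 0 := by
    exact_mod_cast (CharP.cast_eq_zero_iff K ℓ (2 * q)).not.2 (by simp [hℓ.dvd_mul, hℓq, hℓ2])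
  rw [aeval_derivative_Phi_of_natCast_eq_zero hge ((CharP.cast_eq_zero_iff K ℓ p).2 hdvd)] at hroot
  simpa [h2q, hα, sub_eq_zero] using hroot

/-- Let `ℓ` be an odd prime, `p, q` coprime positive integers with `ℓ ∣ p`,
`p ≥ 4q + 1`, and `K` a field of characteristic `ℓ`. If `α ∈ K` is nonzero and the image
in `K[X]` of the formal derivative of `Φ_{p,q}` vanishes at `α`, then `α^{4q} = 1` or
`2α^{4q} - α^{2q} + 2 = 0`. -/
theorem roots_of_derivative_Phi_char_ell
    (ℓ : ℕ) (hℓ : ℓ.Prime) (hℓodd : Odd ℓ)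
    (p q : ℕ) (hp : 0 < p) (hq : 0 < q) (hco : Nat.Coprime p q)
    (hdvd : ℓ ∣ p) (hge : 4 * q + 1 ≤ p)
    (K : Type*) [Field K] [CharP K ℓ]
    (α : K) (hα : α ≠ 0)
    (hroot : Polynomial.aeval α (Polynomial.derivative (Phi p q)) = 0) :
    α ^ (4 * q) = 1 ∨ 2 * α ^ (4 * q) - α ^ (2 * q) + 2 = 0 :=
  roots_of_derivative_Phi_char_ell_general ℓ hℓ hℓodd p q hco hdvd hge K α hα hroot
end

section
/- For all real numbers x and y satisfying cos x + 1 − cos(4y) + cos(2y) = 0, one has (4·sin(4y) − 2·sin(2y))² ≥ 20·sin²x. -/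
open Real

/-- For all real `x, y` with `cos x + 1 - cos(4y) + cos(2y) = 0`, one has
`(4 sin(4y) - 2 sin(2y))² ≥ 20 sin² x`. -/
theorem slope_bound_on_characteristic_variety (x y : ℝ)
    (h : Real.cos x + 1 - Real.cos (4 * y) + Real.cos (2 * y) = 0) :
    (4 * Real.sin (4 * y) - 2 * Real.sin (2 * y)) ^ 2 ≥ 20 * Real.sin x ^ 2 := by
  have hc4 : Real.cos (4 * y) = 2 * Real.cos (2 * y) ^ 2 - 1 := by
    rw [show (4 : ℝ) * y = 2 * (2 * y) by ring, Real.cos_two_mul]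
  have hs4 : Real.sin (4 * y) = 2 * Real.sin (2 * y) * Real.cos (2 * y) := by
    rw [show (4 : ℝ) * y = 2 * (2 * y) by ring, Real.sin_two_mul]
  have hsx := Real.sin_sq_add_cos_sq x
  have hsy := Real.sin_sq_add_cos_sq (2 * y)
  have hc1 : Real.cos (2 * y) ≤ 1 := Real.cos_le_one _
  have hc2 : -1 ≤ Real.cos (2 * y) := Real.neg_one_le_cos _
  have hcx : Real.cos x = 2 * Real.cos (2 * y) ^ 2 - Real.cos (2 * y) - 2 := by
    rw [hc4] at h; linarith
  have hs2 : Real.sin (2 * y) ^ 2 = 1 - Real.cos (2 * y) ^ 2 := by linarith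
  have hsx2 : Real.sin x ^ 2 = 1 - Real.cos x ^ 2 := by linarith
  set c := Real.cos (2 * y) with hc
  have key : (4 * Real.sin (4 * y) - 2 * Real.sin (2 * y)) ^ 2 - 20 * Real.sin x ^ 2
      = 16 * ((1 - c) * ((1 + c) ^ 2 * (4 - c))) := by
    rw [hs4, hsx2, hcx]
    linear_combination (8 * c - 2) ^ 2 * hs2
  nlinarith [mul_nonneg (mul_nonneg (sub_nonneg.mpr hc1) (sq_nonneg (1 + c))) (by linarith : (0:ℝ) ≤ 4 - c), key]
end

section
/- Let p and q be positive real numbers with p < 2√5·q. For all real x, y such that cos x + 1 − cos(4y) + cos(2y) = 0 and (sin x, 4·sin(4y) − 2·sin(2y)) ≠ (0,0), one has −p·sin x + q·(4·sin(4y) − 2·sin(2y)) ≠ 0. -/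
open Real

/-- Let `p, q > 0` be reals with `p < 2√5 q`. For all real `x, y` with
`cos x + 1 - cos(4y) + cos(2y) = 0` and `(sin x, 4 sin(4y) - 2 sin(2y)) ≠ (0,0)`,
one has `-p sin x + q (4 sin(4y) - 2 sin(2y)) ≠ 0`. -/
theorem transversality_for_small_slopes (p q : ℝ) (hp : 0 < p) (hq : 0 < q)
    (hslope : p < 2 * Real.sqrt 5 * q) (x y : ℝ)
    (hcurve : Real.cos x + 1 - Real.cos (4 * y) + Real.cos (2 * y) = 0)
    (hsmooth : (Real.sin x, 4 * Real.sin (4 * y) - 2 * Real.sin (2 * y)) ≠ (0, 0)) :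
    -p * Real.sin x + q * (4 * Real.sin (4 * y) - 2 * Real.sin (2 * y)) ≠ 0 := by
  intro h
  have h4c : Real.cos (4 * y) = 2 * Real.cos (2 * y) ^ 2 - 1 := by
    rw [show (4 : ℝ) * y = 2 * (2 * y) by ring, Real.cos_two_mul]
  have h4s : Real.sin (4 * y) = 2 * Real.sin (2 * y) * Real.cos (2 * y) := by
    rw [show (4 : ℝ) * y = 2 * (2 * y) by ring, Real.sin_two_mul]
  set u := Real.cos (2 * y) with hu
  set s := Real.sin (2 * y) with hs
  set c := Real.cos x with hc
  have hcx : c = 2 * u ^ 2 - u - 2 := by rw [h4c] at hcurve; linarith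
  have hsx2 : Real.sin x ^ 2 = 1 - c ^ 2 := by
    have := Real.sin_sq_add_cos_sq x; linarith
  have hs2 : s ^ 2 = 1 - u ^ 2 := by
    have := Real.sin_sq_add_cos_sq (2 * y); linarith
  have hu1 : -1 ≤ u := Real.neg_one_le_cos _
  have hu2 : u ≤ 1 := Real.cos_le_one _
  -- sin x ≠ 0
  have hsxne : Real.sin x ≠ 0 := by
    intro h0
    apply hsmooth
    have hD : q * (4 * Real.sin (4 * y) - 2 * Real.sin (2 * y)) = 0 := by
      rw [h0] at h; linarith
    have hD2 : 4 * Real.sin (4 * y) - 2 * Real.sin (2 * y) = 0 :=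
      (mul_eq_zero.mp hD).resolve_left hq.ne'
    rw [h0, hD2]
  have hsx2pos : 0 < Real.sin x ^ 2 := by positivity
  have hc2 : c ^ 2 < 1 := by linarith
  have hcl : -1 ≤ c := Real.neg_one_le_cos _
  have hcu : c ≤ 1 := Real.cos_le_one _
  have hclt : -1 < c := by nlinarith [sq_nonneg (c + 1)]
  have hcgt : c < 1 := by nlinarith [sq_nonneg (c - 1)]
  -- u ∈ (-1, -1/2)
  have huu : u < -1/2 := by
    by_contra hcon
    push_neg at hcon
    nlinarith [mul_nonneg (by linarith : (0:ℝ) ≤ 2*u+1) (by linarith : (0:ℝ) ≤ 1 - u)]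
  have hul : -1 < u := by
    by_contra hcon
    push_neg at hcon
    nlinarith
  -- derivative expression
  have hE : p * Real.sin x = q * (s * (8 * u - 2)) := by
    rw [h4s] at h
    linear_combination -h
  have hE2 : p ^ 2 * (1 - c ^ 2) = q ^ 2 * ((1 - u ^ 2) * (8 * u - 2) ^ 2) := by
    linear_combination (p * Real.sin x + q * (s * (8 * u - 2))) * hE - p ^ 2 * hsx2
      + q ^ 2 * (8 * u - 2) ^ 2 * hs2
  -- key inequality
  have hkey : 20 * (1 - c ^ 2) < (1 - u ^ 2) * (8 * u - 2) ^ 2 := by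
    have hfac : (1 - u ^ 2) * (8 * u - 2) ^ 2 - 20 * (1 - c ^ 2)
        = 16 * ((1 - u ^ 2) * (4 - u) * (u + 1)) := by rw [hcx]; ring
    have hP : 0 < (1 - u ^ 2) * (4 - u) * (u + 1) :=
      mul_pos (mul_pos (by nlinarith : (0:ℝ) < 1 - u ^ 2)
        (by linarith : (0:ℝ) < 4 - u)) (by linarith : (0:ℝ) < u + 1)
    linarith [hfac, hP]
  have hp20 : p ^ 2 < 20 * q ^ 2 := by
    have h5 : Real.sqrt 5 * Real.sqrt 5 = 5 := Real.mul_self_sqrt (by norm_num)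
    calc p ^ 2 = p * p := pow_two p
      _ < (2 * Real.sqrt 5 * q) * (2 * Real.sqrt 5 * q) :=
          mul_self_lt_mul_self hp.le hslope
      _ = 20 * q ^ 2 := by linear_combination (4 * q ^ 2) * h5
  have h1 : q ^ 2 * (20 * (1 - c ^ 2)) < q ^ 2 * ((1 - u ^ 2) * (8 * u - 2) ^ 2) :=
    mul_lt_mul_of_pos_left hkey (by positivity)
  have h2 : 20 * q ^ 2 * (1 - c ^ 2) < p ^ 2 * (1 - c ^ 2) := by
    calc 20 * q ^ 2 * (1 - c ^ 2) = q ^ 2 * (20 * (1 - c ^ 2)) := by ring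
      _ < q ^ 2 * ((1 - u ^ 2) * (8 * u - 2) ^ 2) := h1
      _ = p ^ 2 * (1 - c ^ 2) := hE2.symm
  have h3 : 20 * q ^ 2 < p ^ 2 :=
    lt_of_mul_lt_mul_right h2 (by linarith : (0:ℝ) ≤ 1 - c ^ 2)
  linarith
end
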